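/- arXiv:2506.18356 — 2 statements merged into one kernel-verified Lean document; each statement's English description precedes it below -/
import Mathlib

section
/- Let a ∈ ℝⁿ with a ≥ 0 and let B be an entrywise nonnegative n×n×n tensor. Let m be the minimal nonnegative solution of x = a + Bx², assume R_m = I − Bm: − B:m is invertible with R_m⁻¹ entrywise nonnegative, and set y = R_m⁻¹a. If κ ∈ ℝ is such that y ≤ κ·m entrywise, then R_m⁻¹m ≤ (2κ−1)·m and R_m⁻¹(Bm²) ≤ (κ−1)·m entrywise. -/
open Matrix

/-- `(tapp B x y) i = Σ_{j,k} B i j k * x j * y k`, the tensor–vector–vector product. -/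
def tapp {n : ℕ} (B : Fin n → Fin n → Fin n → ℝ) (x y : Fin n → ℝ) : Fin n → ℝ :=
  fun i => ∑ j, ∑ k, B i j k * x j * y k

/-- The matrix `Bx:`, satisfying `(Bx:) h = B x h`; `(Bx:)_{ij} = Σ_k b_{ikj} x_k`. -/
def matL {n : ℕ} (B : Fin n → Fin n → Fin n → ℝ) (x : Fin n → ℝ) :
    Matrix (Fin n) (Fin n) ℝ :=
  Matrix.of fun i j => ∑ k, B i k j * x k

/-- The matrix `B:x`, satisfying `(B:x) h = B h x`; `(B:x)_{ij} = Σ_k b_{ijk} x_k`. -/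
def matR {n : ℕ} (B : Fin n → Fin n → Fin n → ℝ) (x : Fin n → ℝ) :
    Matrix (Fin n) (Fin n) ℝ :=
  Matrix.of fun i j => ∑ k, B i j k * x k

/-- `R_x = I − Bx: − B:x`, the negative Jacobian of `x ↦ a + Bx² − x`. -/
def Rmat {n : ℕ} (B : Fin n → Fin n → Fin n → ℝ) (x : Fin n → ℝ) :
    Matrix (Fin n) (Fin n) ℝ :=
  1 - matL B x - matR B x


/-! Since `Bm:` and `B:m` both send `m` to `Bm²`, the fixed-point equation gives
`R_m m = m − 2Bm² = 2a − m`. Applying `R_m⁻¹` yields the identities `R_m⁻¹ m = 2y − m` and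
`R_m⁻¹ (Bm²) = R_m⁻¹ (m − a) = y − m`, from which both bounds follow from `y ≤ κ m`. -/

section

variable {n : ℕ} (B : Fin n → Fin n → Fin n → ℝ)

theorem matL_mulVec (x h : Fin n → ℝ) : matL B x *ᵥ h = tapp B x h := by
  ext i
  simp only [matL, tapp, mulVec, dotProduct, of_apply, Finset.sum_mul]
  exact Finset.sum_comm

theorem matR_mulVec (x h : Fin n → ℝ) : matR B x *ᵥ h = tapp B h x := by
  ext i
  simp only [matR, tapp, mulVec, dotProduct, of_apply, Finset.sum_mul]
  exact Finset.sum_congr rfl fun _ _ => Finset.sum_congr rfl fun _ _ => by ring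

theorem Rmat_mulVec_self (x : Fin n → ℝ) : Rmat B x *ᵥ x = x - (2 : ℝ) • tapp B x x := by
  rw [Rmat, sub_mulVec, sub_mulVec, one_mulVec, matL_mulVec, matR_mulVec, two_smul, sub_sub]

variable {B} {a x : Fin n → ℝ}

theorem Rmat_mulVec_self_of_eq_add_tapp (hx : x = a + tapp B x x) :
    Rmat B x *ᵥ x = (2 : ℝ) • a - x := by
  have htapp : tapp B x x = x - a := eq_sub_of_add_eq' hx.symm
  rw [Rmat_mulVec_self, htapp, smul_sub, two_smul, two_smul]
  abel

theorem Rmat_inv_mulVec_self_of_eq_add_tapp (hdet : IsUnit (Rmat B x).det)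
    (hx : x = a + tapp B x x) :
    (Rmat B x)⁻¹ *ᵥ x = (2 : ℝ) • ((Rmat B x)⁻¹ *ᵥ a) - x := by
  have hcancel : (Rmat B x)⁻¹ *ᵥ (Rmat B x *ᵥ x) = x := by
    rw [mulVec_mulVec, nonsing_inv_mul _ hdet, one_mulVec]
  rw [Rmat_mulVec_self_of_eq_add_tapp hx, mulVec_sub, mulVec_smul] at hcancel
  exact eq_sub_of_add_eq' (sub_eq_iff_eq_add.mp hcancel).symm

theorem Rmat_inv_mulVec_tapp_self_of_eq_add_tapp (hdet : IsUnit (Rmat B x).det)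
    (hx : x = a + tapp B x x) :
    (Rmat B x)⁻¹ *ᵥ tapp B x x = (Rmat B x)⁻¹ *ᵥ a - x := by
  rw [eq_sub_of_add_eq' hx.symm, mulVec_sub, Rmat_inv_mulVec_self_of_eq_add_tapp hdet hx,
    two_smul]
  abel

end

theorem Rinv_m_bounds_of_kappa_general
    {n : ℕ} (a : Fin n → ℝ) (B : Fin n → Fin n → Fin n → ℝ)
    (m : Fin n → ℝ)
    (hmsol : m = a + tapp B m m)
    (hdet : IsUnit (Rmat B m).det)
    (y : Fin n → ℝ) (hy : y = (Rmat B m)⁻¹ *ᵥ a)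
    (κ : ℝ) (hκ : ∀ i, y i ≤ κ * m i) :
    (∀ i, ((Rmat B m)⁻¹ *ᵥ m) i ≤ (2 * κ - 1) * m i) ∧
    (∀ i, ((Rmat B m)⁻¹ *ᵥ tapp B m m) i ≤ (κ - 1) * m i) := by
  subst hy
  refine ⟨fun i => ?_, fun i => ?_⟩
  · have hi := congrFun (Rmat_inv_mulVec_self_of_eq_add_tapp hdet hmsol) i
    simp only [Pi.sub_apply, Pi.smul_apply, smul_eq_mul] at hi
    linarith [hκ i]
  · have hi := congrFun (Rmat_inv_mulVec_tapp_self_of_eq_add_tapp hdet hmsol) i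
    simp only [Pi.sub_apply] at hi
    linarith [hκ i]

/-- If `y = R_m⁻¹ a ≤ κ·m` entrywise, then `R_m⁻¹ m ≤ (2κ−1)·m` and
`R_m⁻¹ (Bm²) ≤ (κ−1)·m` entrywise. -/
theorem Rinv_m_bounds_of_kappa
    {n : ℕ} (a : Fin n → ℝ) (B : Fin n → Fin n → Fin n → ℝ)
    (ha : ∀ i, 0 ≤ a i) (hB : ∀ i j k, 0 ≤ B i j k)
    (m : Fin n → ℝ)
    (hm0 : ∀ i, 0 ≤ m i)
    (hmsol : m = a + tapp B m m)
    (hmin : ∀ x : Fin n → ℝ, (∀ i, 0 ≤ x i) → x = a + tapp B x x → ∀ i, m i ≤ x i)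
    (hdet : IsUnit (Rmat B m).det)
    (hinv : ∀ i j, 0 ≤ (Rmat B m)⁻¹ i j)
    (y : Fin n → ℝ) (hy : y = (Rmat B m)⁻¹ *ᵥ a)
    (κ : ℝ) (hκ : ∀ i, y i ≤ κ * m i) :
    (∀ i, ((Rmat B m)⁻¹ *ᵥ m) i ≤ (2 * κ - 1) * m i) ∧
    (∀ i, ((Rmat B m)⁻¹ *ᵥ tapp B m m) i ≤ (κ - 1) * m i) :=
  Rinv_m_bounds_of_kappa_general a B m hmsol hdet y hy κ hκ
end

section
/- Let a ∈ ℝⁿ with a ≥ 0, let B be an entrywise nonnegative n×n×n tensor, define F(x) = a + Bx² − x and R_x = I − Bx: − B:x, and let m be the minimal nonnegative solution of x = a + Bx². Let x_k and y_k satisfy 0 ≤ y_k ≤ x_k ≤ m, F(x_k) ≥ 0 and F(y_k) ≥ 0 entrywise. Suppose R_{x_k} and R_{y_k} are invertible with R_{x_k}⁻¹ ≥ 0 and R_{y_k}⁻¹ ≥ 0 entrywise, and that R_{y_k} = M − N is a splitting with N ≥ 0 entrywise and M invertible with M⁻¹ ≥ 0 entrywise. Define the Newton iterate x_{k+1} =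 x_k + R_{x_k}⁻¹F(x_k) and the block Jacobi iterate y_{k+1} = M⁻¹(N y_k + a − By_k²). Then y_{k+1} ≤ x_{k+1} entrywise; moreover F(x_{k+1}) ≥ 0 and F(y_{k+1}) ≥ 0 entrywise. -/
open Matrix

/-! The residual `F(x) = a + Bx² − x` is quadratic with derivative `−R_x`, so the expansion
`F(x + h) = F(x) − R_x h + Bh²` is exact. For the Newton correction `d` (`R_x d = F(x)`) it gives
`F(x + d) = Bd² ≥ 0`. The Jacobi step is `y + e` with `M e = F(y)`, and since `R_y = M − N` the
expansion gives `F(y + e) = N e + Be² ≥ 0`. Expanding around `y` at `z = x + d` gives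
`M (z − (y + e)) = B(z − y)² − F(z) + N (z − y) = B(z − y)² − Bd² + N (z − y)`, which is
nonnegative because `z − y ≥ d ≥ 0`; applying `M⁻¹ ≥ 0` gives `y + e ≤ z`. -/

section NonnegMatrix

variable {ι R : Type*} [Fintype ι] [CommRing R]

lemma Matrix.mulVec_nonneg_of_nonneg [PartialOrder R] [IsOrderedRing R]
    {A : Matrix ι ι R} {v : ι → R} (hA : ∀ i j, 0 ≤ A i j) (hv : 0 ≤ v) : 0 ≤ A *ᵥ v :=
  fun i => Finset.sum_nonneg fun j _ => mul_nonneg (hA i j) (hv j)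

lemma Matrix.nonneg_of_mulVec_nonneg [DecidableEq ι] [PartialOrder R] [IsOrderedRing R]
    {A : Matrix ι ι R} {v : ι → R} (hA : IsUnit A.det) (hAinv : ∀ i j, 0 ≤ A⁻¹ i j)
    (hv : 0 ≤ A *ᵥ v) : 0 ≤ v := by
  simpa [mulVec_mulVec, nonsing_inv_mul _ hA] using mulVec_nonneg_of_nonneg hAinv hv

lemma Matrix.mulVec_inv_mulVec [DecidableEq ι] {A : Matrix ι ι R}
    (hA : IsUnit A.det) (v : ι → R) : A *ᵥ (A⁻¹ *ᵥ v) = v := by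
  rw [mulVec_mulVec, mul_nonsing_inv _ hA, one_mulVec]

end NonnegMatrix

section Tensor

variable {n : ℕ} (B : Fin n → Fin n → Fin n → ℝ)

lemma tapp_add_left (u v w : Fin n → ℝ) : tapp B (u + v) w = tapp B u w + tapp B v w := by
  funext i
  simp [tapp, add_mul, mul_add, Finset.sum_add_distrib]

lemma tapp_add_right (u v w : Fin n → ℝ) : tapp B u (v + w) = tapp B u v + tapp B u w := by
  funext i
  simp [tapp, mul_add, Finset.sum_add_distrib]

lemma Rmat_mulVec (x h : Fin n → ℝ) : Rmat B x *ᵥ h = h - tapp B x h - tapp B h x := by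
  funext i
  simp only [Rmat, sub_mulVec, one_mulVec, Pi.sub_apply]
  congr 1
  · congr 1
    simp only [matL, mulVec, dotProduct, of_apply, tapp, Finset.sum_mul]
    exact Finset.sum_comm
  · simp only [matR, mulVec, dotProduct, of_apply, tapp, Finset.sum_mul]
    exact Finset.sum_congr rfl fun j _ => Finset.sum_congr rfl fun k _ => by ring

lemma residual_add (a x h : Fin n → ℝ) :
    a + tapp B (x + h) (x + h) - (x + h) = (a + tapp B x x - x) - Rmat B x *ᵥ h + tapp B h h := by
  rw [Rmat_mulVec, tapp_add_left, tapp_add_right, tapp_add_right]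
  abel

variable {B}

lemma tapp_mono (hB : ∀ i j k, 0 ≤ B i j k) {u u' v v' : Fin n → ℝ} (hu : 0 ≤ u) (huu' : u ≤ u')
    (hv : 0 ≤ v) (hvv' : v ≤ v') : tapp B u v ≤ tapp B u' v' := fun i => by
  unfold tapp
  gcongr with j _ k _
  · exact hv k
  · exact mul_nonneg (hB i j k) (hu.trans huu' j)
  · exact hB i j k
  · exact huu' j
  · exact hvv' k

lemma tapp_nonneg (hB : ∀ i j k, 0 ≤ B i j k) {u v : Fin n → ℝ} (hu : 0 ≤ u) (hv : 0 ≤ v) :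
    0 ≤ tapp B u v :=
  fun i => Finset.sum_nonneg fun j _ => Finset.sum_nonneg fun k _ =>
    mul_nonneg (mul_nonneg (hB i j k) (hu j)) (hv k)

end Tensor

section Steps

variable {n : ℕ} {a : Fin n → ℝ} {B : Fin n → Fin n → Fin n → ℝ}

lemma residual_newton_step {x d : Fin n → ℝ} (hd : Rmat B x *ᵥ d = a + tapp B x x - x) :
    a + tapp B (x + d) (x + d) - (x + d) = tapp B d d := by
  rw [residual_add, hd, sub_self, zero_add]

variable {y e : Fin n → ℝ} {M N : Matrix (Fin n) (Fin n) ℝ}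

lemma residual_jacobi_step (hsplit : Rmat B y = M - N) (he : M *ᵥ e = a + tapp B y y - y) :
    a + tapp B (y + e) (y + e) - (y + e) = N *ᵥ e + tapp B e e := by
  rw [residual_add, hsplit, sub_mulVec, he]
  abel

lemma jacobi_step_eq (hsplit : Rmat B y = M - N) (hM : IsUnit M.det) :
    M⁻¹ *ᵥ (N *ᵥ y + a - tapp B y y) = y + M⁻¹ *ᵥ (a + tapp B y y - y) := by
  have hNy : N *ᵥ y + a - tapp B y y = M *ᵥ y + (a + tapp B y y - y) := by
    rw [eq_add_of_sub_eq' hsplit.symm, add_mulVec, Rmat_mulVec]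
    abel
  rw [hNy, mulVec_add, mulVec_mulVec, nonsing_inv_mul _ hM, one_mulVec]

lemma jacobi_step_le (hsplit : Rmat B y = M - N)
    (hN : ∀ i j, 0 ≤ N i j) (hM : IsUnit M.det) (hMinv : ∀ i j, 0 ≤ M⁻¹ i j)
    (he : M *ᵥ e = a + tapp B y y - y) {z : Fin n → ℝ} (hyz : y ≤ z)
    (hz : a + tapp B z z - z ≤ tapp B (z - y) (z - y)) : y + e ≤ z := by
  have hzy : 0 ≤ z - y := sub_nonneg.mpr hyz
  have key : M *ᵥ (z - (y + e)) =
      (tapp B (z - y) (z - y) - (a + tapp B z z - z)) + N *ᵥ (z - y) := by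
    have hexp := residual_add B a y (z - y)
    rw [add_sub_cancel] at hexp
    rw [sub_add_eq_sub_sub, mulVec_sub, he, eq_add_of_sub_eq' hsplit.symm, add_mulVec, hexp]
    abel
  refine sub_nonneg.mp (nonneg_of_mulVec_nonneg hM hMinv ?_)
  rw [key]
  exact add_nonneg (sub_nonneg.mpr hz) (mulVec_nonneg_of_nonneg hN hzy)

end Steps

theorem newton_vs_block_jacobi_step_general
    {n : ℕ} (a : Fin n → ℝ) (B : Fin n → Fin n → Fin n → ℝ)
    (hB : ∀ i j k, 0 ≤ B i j k)
    (xk yk : Fin n → ℝ)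
    (hykxk : ∀ i, yk i ≤ xk i)
    (hFx : ∀ i, 0 ≤ (a + tapp B xk xk - xk) i)
    (hFy : ∀ i, 0 ≤ (a + tapp B yk yk - yk) i)
    (hRxdet : IsUnit (Rmat B xk).det) (hRxinv : ∀ i j, 0 ≤ (Rmat B xk)⁻¹ i j)
    (M N : Matrix (Fin n) (Fin n) ℝ)
    (hsplit : Rmat B yk = M - N)
    (hN : ∀ i j, 0 ≤ N i j)
    (hMdet : IsUnit M.det) (hMinv : ∀ i j, 0 ≤ M⁻¹ i j)
    (xk1 yk1 : Fin n → ℝ)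
    (hxk1 : xk1 = xk + (Rmat B xk)⁻¹ *ᵥ (a + tapp B xk xk - xk))
    (hyk1 : yk1 = M⁻¹ *ᵥ (N *ᵥ yk + a - tapp B yk yk)) :
    (∀ i, yk1 i ≤ xk1 i) ∧
    (∀ i, 0 ≤ (a + tapp B xk1 xk1 - xk1) i) ∧
    (∀ i, 0 ≤ (a + tapp B yk1 yk1 - yk1) i) := by
  set d := (Rmat B xk)⁻¹ *ᵥ (a + tapp B xk xk - xk)
  set e := M⁻¹ *ᵥ (a + tapp B yk yk - yk)
  have hd : 0 ≤ d := mulVec_nonneg_of_nonneg hRxinv hFx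
  have he : 0 ≤ e := mulVec_nonneg_of_nonneg hMinv hFy
  have hFxd : a + tapp B (xk + d) (xk + d) - (xk + d) = tapp B d d :=
    residual_newton_step (mulVec_inv_mulVec hRxdet _)
  have hFye : a + tapp B (yk + e) (yk + e) - (yk + e) = N *ᵥ e + tapp B e e :=
    residual_jacobi_step hsplit (mulVec_inv_mulVec hMdet _)
  have hd_le : d ≤ xk + d - yk := by
    rw [add_sub_right_comm]
    exact le_add_of_nonneg_left (sub_nonneg.mpr hykxk)
  rw [jacobi_step_eq hsplit hMdet] at hyk1
  subst hxk1 hyk1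
  refine ⟨?_, hFxd ▸ tapp_nonneg hB hd hd,
    hFye ▸ add_nonneg (mulVec_nonneg_of_nonneg hN he) (tapp_nonneg hB he he)⟩
  refine jacobi_step_le hsplit hN hMdet hMinv (mulVec_inv_mulVec hMdet _)
    (le_add_of_le_of_nonneg hykxk hd) ?_
  exact hFxd ▸ tapp_mono hB hd hd_le hd hd_le

/-- Comparison of one Newton step and one block-Jacobi step
(Theorem `thmcompareBJN` in the paper): if `y_k ≤ x_k` then `y_{k+1} ≤ x_{k+1}`,
and both residuals stay nonnegative. -/
theorem newton_vs_block_jacobi_step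
    {n : ℕ} (a : Fin n → ℝ) (B : Fin n → Fin n → Fin n → ℝ)
    (ha : ∀ i, 0 ≤ a i) (hB : ∀ i j k, 0 ≤ B i j k)
    (m : Fin n → ℝ)
    (hm0 : ∀ i, 0 ≤ m i)
    (hmsol : m = a + tapp B m m)
    (hmin : ∀ x : Fin n → ℝ, (∀ i, 0 ≤ x i) → x = a + tapp B x x → ∀ i, m i ≤ x i)
    (xk yk : Fin n → ℝ)
    (hyk0 : ∀ i, 0 ≤ yk i) (hykxk : ∀ i, yk i ≤ xk i) (hxkm : ∀ i, xk i ≤ m i)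
    (hFx : ∀ i, 0 ≤ (a + tapp B xk xk - xk) i)
    (hFy : ∀ i, 0 ≤ (a + tapp B yk yk - yk) i)
    (hRxdet : IsUnit (Rmat B xk).det) (hRxinv : ∀ i j, 0 ≤ (Rmat B xk)⁻¹ i j)
    (hRydet : IsUnit (Rmat B yk).det) (hRyinv : ∀ i j, 0 ≤ (Rmat B yk)⁻¹ i j)
    (M N : Matrix (Fin n) (Fin n) ℝ)
    (hsplit : Rmat B yk = M - N)
    (hN : ∀ i j, 0 ≤ N i j)
    (hMdet : IsUnit M.det) (hMinv : ∀ i j, 0 ≤ M⁻¹ i j)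
    (xk1 yk1 : Fin n → ℝ)
    (hxk1 : xk1 = xk + (Rmat B xk)⁻¹ *ᵥ (a + tapp B xk xk - xk))
    (hyk1 : yk1 = M⁻¹ *ᵥ (N *ᵥ yk + a - tapp B yk yk)) :
    (∀ i, yk1 i ≤ xk1 i) ∧
    (∀ i, 0 ≤ (a + tapp B xk1 xk1 - xk1) i) ∧
    (∀ i, 0 ≤ (a + tapp B yk1 yk1 - yk1) i) :=
  newton_vs_block_jacobi_step_general a B hB xk yk hykxk hFx hFy hRxdet hRxinv M N hsplit hN hMdet
    hMinv xk1 yk1 hxk1 hyk1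
end
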